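/- Let G be a finite simple graph and let G′ be the graph obtained from G by a single simple fold (identifying two vertices x and y at distance two). Then χ(G) ≤ χ(G′) ≤ χ(G) + 1, where χ denotes the chromatic number. -/

import Mathlib

/-- A simple fold of `G` onto `H` via the identification map `f`:
two vertices `x ≠ y` at distance exactly two are identified, all other
vertices are kept distinct, and `H` is the resulting quotient graph. -/
def IsSimpleFold {V W : Type} (G : SimpleGraph V) (H : SimpleGraph W) (f : V → W) : Prop :=
  Function.Surjective f ∧
  (∃ x y : V, x ≠ y ∧ G.dist x y = 2 ∧ f x = f y ∧
    ∀ u v : V, u ≠ v → f u = f v → (u = x ∧ v = y) ∨ (u = y ∧ v = x)) ∧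
  ∀ a b : W, H.Adj a b ↔ ∃ u v : V, G.Adj u v ∧ f u = a ∧ f v = b

/-- `IsFolding G H f` : `H` is obtained from `G` by a (possibly empty)
sequence of simple folds whose composite identification map is `f`. -/
inductive IsFolding : ∀ {V W : Type}, SimpleGraph V → SimpleGraph W → (V → W) → Prop
  | refl {V : Type} (G : SimpleGraph V) : IsFolding G G id
  | step {V W U : Type} {G : SimpleGraph V} {H : SimpleGraph W} {K : SimpleGraph U}
      {f : V → W} {g : W → U} :
      IsSimpleFold G H f → IsFolding H K g → IsFolding G K (g ∘ f)

/-- `G` folds onto `H`. -/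
def FoldsOnto {V W : Type} (G : SimpleGraph V) (H : SimpleGraph W) : Prop :=
  ∃ f : V → W, IsFolding G H f

/-- The folding number `Σ(G)`: the largest `s` such that `G` folds onto `K_s`. -/
noncomputable def foldingNumber {V : Type} (G : SimpleGraph V) : ℕ :=
  sSup {s : ℕ | FoldsOnto G (SimpleGraph.completeGraph (Fin s))}

/-- A complete coloring of `G` with exactly `s` colors. -/
def IsCompleteColoring {V : Type} (G : SimpleGraph V) {s : ℕ} (c : V → Fin s) : Prop :=
  (∀ u v : V, G.Adj u v → c u ≠ c v) ∧
  Function.Surjective c ∧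
  ∀ a b : Fin s, a ≠ b → ∃ u v : V, G.Adj u v ∧ c u = a ∧ c v = b

/-- The achromatic number `Ψ(G)`. -/
noncomputable def achromaticNumber {V : Type} (G : SimpleGraph V) : ℕ :=
  sSup {s : ℕ | ∃ c : V → Fin s, IsCompleteColoring G c}

/-!
`f` is a graph homomorphism `G →g G'`, which gives `χ(G) ≤ χ(G')`. Off the folded vertex
`w₀ = f x` the map `f` is injective, so choosing preimages maps `G' - w₀` homomorphically
into `G`; colour `G' - w₀` like `G` and give `w₀` one fresh colour.
-/

namespace SimpleGraph

variable {W : Type*} {H : SimpleGraph W}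

theorem Colorable.succ_of_induce_compl {w₀ : W} {n : ℕ} (hc : (H.induce {w₀}ᶜ).Colorable n) :
    H.Colorable (n + 1) := by
  classical
  obtain ⟨C⟩ := hc
  let C' : H.Coloring (Option (Fin n)) :=
    Coloring.mk (fun w => if hw : w = w₀ then none else some (C ⟨w, hw⟩)) fun {a b} hab => by
      by_cases ha : a = w₀ <;> by_cases hb : b = w₀
      · exact absurd (ha.trans hb.symm) hab.ne
      all_goals simp only [ha, hb, dite_true, dite_false, ne_eq, reduceCtorEq, not_false_eq_true,
        Option.some.injEq]
      exact C.valid (by simpa using hab)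
  simpa using C'.colorable

theorem chromaticNumber_le_chromaticNumber_induce_compl_add_one (w₀ : W) :
    H.chromaticNumber ≤ (H.induce {w₀}ᶜ).chromaticNumber + 1 := by
  cases hχ : (H.induce {w₀}ᶜ).chromaticNumber using ENat.recTopCoe with
  | top => simp
  | coe n =>
    exact_mod_cast (Colorable.succ_of_induce_compl
      (chromaticNumber_le_iff_colorable.mp hχ.le)).chromaticNumber_le

end SimpleGraph

open SimpleGraph

namespace IsSimpleFold

variable {V W : Type} {G : SimpleGraph V} {H : SimpleGraph W} {f : V → W}

def hom (h : IsSimpleFold G H f) : G →g H where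
  toFun := f
  map_rel' {u v} huv := (h.2.2 _ _).mpr ⟨u, v, huv, rfl, rfl⟩

theorem injOn_preimage_compl (h : IsSimpleFold G H f) :
    ∃ w₀, Set.InjOn f (f ⁻¹' {w₀}ᶜ) := by
  obtain ⟨-, ⟨x, y, -, -, hfxy, hfiber⟩, -⟩ := h
  refine ⟨f x, fun u hu v _ huv => by_contra fun hne => hu ?_⟩
  rcases hfiber u v hne huv with ⟨rfl, -⟩ | ⟨rfl, -⟩
  exacts [rfl, hfxy.symm]

theorem exists_hom_induce_compl (h : IsSimpleFold G H f) :
    ∃ w₀, Nonempty (H.induce {w₀}ᶜ →g G) := by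
  obtain ⟨w₀, hinj⟩ := h.injOn_preimage_compl
  have hsec : ∀ u, f u ≠ w₀ → Function.surjInv h.1 (f u) = u := fun u hu =>
    hinj (by simpa [Function.surjInv_eq h.1] using hu) hu (Function.surjInv_eq h.1 _)
  refine ⟨w₀, ⟨⟨fun w => Function.surjInv h.1 w, fun {a b} hab => ?_⟩⟩⟩
  obtain ⟨u, v, huv, hu, hv⟩ := (h.2.2 a b).mp hab
  simp only [← hu, ← hv]
  rwa [hsec u (hu ▸ a.2), hsec v (hv ▸ b.2)]

end IsSimpleFold

theorem chromaticNumber_le_of_simpleFold_general {V W : Type}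
    (G : SimpleGraph V) (G' : SimpleGraph W) (f : V → W)
    (h : IsSimpleFold G G' f) :
    G.chromaticNumber ≤ G'.chromaticNumber ∧
    G'.chromaticNumber ≤ G.chromaticNumber + 1 := by
  obtain ⟨w₀, ⟨φ⟩⟩ := h.exists_hom_induce_compl
  exact ⟨chromaticNumber_mono_of_hom h.hom,
    (chromaticNumber_le_chromaticNumber_induce_compl_add_one w₀).trans
      (add_le_add_left (chromaticNumber_mono_of_hom φ) 1)⟩

/-- A simple fold raises the chromatic number by at most one and never lowers it:
`χ(G) ≤ χ(G') ≤ χ(G) + 1`. -/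
theorem chromaticNumber_le_of_simpleFold {V W : Type} [Fintype V] [Fintype W]
    (G : SimpleGraph V) (G' : SimpleGraph W) (f : V → W)
    (h : IsSimpleFold G G' f) :
    G.chromaticNumber ≤ G'.chromaticNumber ∧
    G'.chromaticNumber ≤ G.chromaticNumber + 1 :=
  chromaticNumber_le_of_simpleFold_general G G' f h
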